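/- (Existence of switching points.) For every iteration index ν ≥ 1 and every d ∈ {1,…,N−1}, δV_ν(d,Δ) → −∞ as Δ → ∞; in particular there exists a finite switching point, namely a smallest Δ* ∈ ℕ such that δV_ν(d,Δ) ≤ 0 for all Δ ≥ Δ*. -/
import Mathlib


/-- Transition weights of the source mismatch chain:
`P d d = 1 - 2p` for `0 ≤ d ≤ N-1`; `P d (d±1) = p` for `1 ≤ d ≤ N-2`;
`P 0 1 = 2p`, `P (N-1) (N-2) = 2p`; all other entries `0`. -/
noncomputable def Pw (N : ℕ) (p : ℝ) (d d' : ℕ) : ℝ :=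
  if d' = d then 1 - 2 * p
  else if d = 0 ∧ d' = 1 then 2 * p
  else if d = N - 1 ∧ d' = N - 2 then 2 * p
  else if 1 ≤ d ∧ d ≤ N - 2 ∧ (d' = d + 1 ∨ d' + 1 = d) then p
  else 0

/-- `S[V](d,Δ) = Σ_{d'=0}^{N-1} P_{d,d'} · V(d', Δ'(d'))` where
`Δ'(d') = 0` if `d' = 0` and `Δ'(d') = Δ + d'` otherwise. -/
noncomputable def Ssum (N : ℕ) (p : ℝ) (V : ℕ × ℕ → ℝ) (d Δ : ℕ) : ℝ :=
  ∑ d' ∈ Finset.range N, Pw N p d d' * V (d', if d' = 0 then 0 else Δ + d')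

/-- `V⁰_{ν+1}(d,Δ) = Δ + S[V_ν](d,Δ)` (value of idling). -/
noncomputable def Vact0 (N : ℕ) (p : ℝ) (V : ℕ × ℕ → ℝ) (d Δ : ℕ) : ℝ :=
  (Δ : ℝ) + Ssum N p V d Δ

/-- `V¹_{ν+1}(d,Δ) = Δ + λ + p_s((1-2p)V_ν(0,0) + 2p V_ν(1,1)) + p_f S[V_ν](d,Δ)`
(value of transmitting), with `p_f = 1 - p_s`. -/
noncomputable def Vact1 (N : ℕ) (p ps lam : ℝ) (V : ℕ × ℕ → ℝ) (d Δ : ℕ) : ℝ :=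
  (Δ : ℝ) + lam + ps * ((1 - 2 * p) * V (0, 0) + 2 * p * V (1, 1))
    + (1 - ps) * Ssum N p V d Δ

/-- Interim value `Q_{ν+1}(d,Δ) = min{V⁰_{ν+1}(d,Δ), V¹_{ν+1}(d,Δ)}`. -/
noncomputable def Qit (N : ℕ) (p ps lam : ℝ) (V : ℕ × ℕ → ℝ) (d Δ : ℕ) : ℝ :=
  min (Vact0 N p V d Δ) (Vact1 N p ps lam V d Δ)

/-- The relative value iteration sequence:
`V_0(d,Δ) = Δ` and `V_{ν+1}(x) = Q_{ν+1}(x) - Q_{ν+1}(0,0)`. -/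
noncomputable def Vit (N : ℕ) (p ps lam : ℝ) : ℕ → ℕ × ℕ → ℝ
  | 0 => fun x => (x.2 : ℝ)
  | ν + 1 => fun x =>
      Qit N p ps lam (Vit N p ps lam ν) x.1 x.2
        - Qit N p ps lam (Vit N p ps lam ν) 0 0

/-- `δV_ν(d,Δ) = V¹_ν(d,Δ) - V⁰_ν(d,Δ)` (for `ν ≥ 1`, built from `V_{ν-1}`). -/
noncomputable def dV (N : ℕ) (p ps lam : ℝ) (ν : ℕ) (d Δ : ℕ) : ℝ :=
  Vact1 N p ps lam (Vit N p ps lam (ν - 1)) d Δ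
    - Vact0 N p (Vit N p ps lam (ν - 1)) d Δ

lemma Pw_nonneg {N : ℕ} {p : ℝ} (hp0 : 0 ≤ p) (hp1 : p ≤ 1/3) (d d' : ℕ) :
    0 ≤ Pw N p d d' := by
  unfold Pw; split_ifs <;> linarith

lemma Pw_diag (N : ℕ) (p : ℝ) (d : ℕ) : Pw N p d d = 1 - 2 * p := by
  unfold Pw; simp

lemma pw_sum (N : ℕ) (p : ℝ) (hN : 2 ≤ N) (d : ℕ) (hd : d < N) :
    ∑ d' ∈ Finset.range N, Pw N p d d' = 1 := by
  rcases Nat.lt_or_ge d 1 with h0 | h1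
  · -- d = 0
    have hd0 : d = 0 := by omega
    subst hd0
    have hfun : ∀ d' : ℕ, Pw N p 0 d' =
        (if d' = 0 then 1 - 2*p else 0) + (if d' = 1 then 2*p else 0) := by
      intro d'
      unfold Pw
      split_ifs <;> first | ring1 | (exfalso; omega)
    rw [Finset.sum_congr rfl (fun d' _ => hfun d'), Finset.sum_add_distrib,
      Finset.sum_ite_eq' (Finset.range N) 0 (fun _ => 1-2*p),
      Finset.sum_ite_eq' (Finset.range N) 1 (fun _ => 2*p)]
    simp only [Finset.mem_range]
    rw [if_pos (by omega), if_pos (by omega)]; ring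
  · rcases Nat.lt_or_ge d (N-1) with h2 | h3
    · -- middle
      have hfun : ∀ d' : ℕ, Pw N p d d' =
          (if d' = d then 1 - 2*p else 0) + (if d' = d+1 then p else 0)
            + (if d' = d-1 then p else 0) := by
        intro d'
        unfold Pw
        split_ifs <;> first | ring1 | (exfalso; omega)
      rw [Finset.sum_congr rfl (fun d' _ => hfun d'), Finset.sum_add_distrib,
        Finset.sum_add_distrib,
        Finset.sum_ite_eq' (Finset.range N) d (fun _ => 1-2*p),
        Finset.sum_ite_eq' (Finset.range N) (d+1) (fun _ => p),
        Finset.sum_ite_eq' (Finset.range N) (d-1) (fun _ => p)]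
      simp only [Finset.mem_range]
      rw [if_pos (by omega), if_pos (by omega), if_pos (by omega)]; ring
    · -- d = N-1
      have hd0 : d = N - 1 := by omega
      subst hd0
      have hfun : ∀ d' : ℕ, Pw N p (N-1) d' =
          (if d' = N-1 then 1 - 2*p else 0) + (if d' = N-2 then 2*p else 0) := by
        intro d'
        unfold Pw
        split_ifs <;> first | ring1 | (exfalso; omega)
      rw [Finset.sum_congr rfl (fun d' _ => hfun d'), Finset.sum_add_distrib,
        Finset.sum_ite_eq' (Finset.range N) (N-1) (fun _ => 1-2*p),
        Finset.sum_ite_eq' (Finset.range N) (N-2) (fun _ => 2*p)]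
      simp only [Finset.mem_range]
      rw [if_pos (by omega), if_pos (by omega)]; ring

lemma Ssum_ge {N : ℕ} {p : ℝ} (hN : 2 ≤ N) (hp0 : 0 ≤ p) (hp1 : p ≤ 1/3)
    {V : ℕ × ℕ → ℝ} {K : ℝ} (hK : 0 ≤ K)
    (hV : ∀ d, d < N → ∀ Δ : ℕ, (Δ : ℝ) - K ≤ V (d, Δ))
    {d : ℕ} (hd : d < N) (Δ : ℕ) : -K ≤ Ssum N p V d Δ := by
  have h1 : ∑ d' ∈ Finset.range N, Pw N p d d' * (-K) ≤ Ssum N p V d Δ := by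
    apply Finset.sum_le_sum
    intro d' hd'
    apply mul_le_mul_of_nonneg_left _ (Pw_nonneg hp0 hp1 d d')
    have := hV d' (Finset.mem_range.mp hd') (if d' = 0 then 0 else Δ + d')
    have h0 : (0:ℝ) ≤ ((if d' = 0 then 0 else Δ + d' : ℕ) : ℝ) := Nat.cast_nonneg _
    linarith
  calc -K = (∑ d' ∈ Finset.range N, Pw N p d d') * (-K) := by
        rw [pw_sum N p hN d hd]; ring
    _ = ∑ d' ∈ Finset.range N, Pw N p d d' * (-K) := by rw [Finset.sum_mul]
    _ ≤ _ := h1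

lemma Ssum_le {N : ℕ} {p : ℝ} (hN : 2 ≤ N) (hp0 : 0 ≤ p) (hp1 : p ≤ 1/3)
    {V : ℕ × ℕ → ℝ} {K : ℝ} (hK : 0 ≤ K)
    (hV : ∀ d, d < N → ∀ Δ : ℕ, V (d, Δ) ≤ K * (Δ + 1))
    {d : ℕ} (hd : d < N) (Δ : ℕ) : Ssum N p V d Δ ≤ K * (Δ + N + 1) := by
  have h1 : Ssum N p V d Δ ≤ ∑ d' ∈ Finset.range N, Pw N p d d' * (K * (Δ + N + 1)) := by
    apply Finset.sum_le_sum
    intro d' hd'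
    apply mul_le_mul_of_nonneg_left _ (Pw_nonneg hp0 hp1 d d')
    have h2 := hV d' (Finset.mem_range.mp hd') (if d' = 0 then 0 else Δ + d')
    have h3 : ((if d' = 0 then 0 else Δ + d' : ℕ) : ℝ) ≤ (Δ : ℝ) + N := by
      have h4 : (if d' = 0 then 0 else Δ + d' : ℕ) ≤ Δ + N := by
        have := Finset.mem_range.mp hd'; split_ifs <;> omega
      calc ((if d' = 0 then 0 else Δ + d' : ℕ) : ℝ) ≤ ((Δ + N : ℕ) : ℝ) := Nat.cast_le.mpr h4
        _ = (Δ : ℝ) + N := by push_cast; ring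
    nlinarith
  calc Ssum N p V d Δ ≤ _ := h1
    _ = (∑ d' ∈ Finset.range N, Pw N p d d') * (K * (Δ + N + 1)) := by rw [Finset.sum_mul]
    _ = K * (Δ + N + 1) := by rw [pw_sum N p hN d hd]; ring

lemma Vit_bounds (N : ℕ) (p ps lam : ℝ) (hN : 2 ≤ N) (hp0 : 0 ≤ p) (hp1 : p ≤ 1/3)
    (hps0 : 0 < ps) (hps1 : ps ≤ 1) (hlam : 0 ≤ lam) :
    ∀ ν : ℕ, ∃ K : ℝ, 1 ≤ K ∧ ∀ d, d < N → ∀ Δ : ℕ,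
      (Δ : ℝ) - K ≤ Vit N p ps lam ν (d, Δ) ∧ Vit N p ps lam ν (d, Δ) ≤ K * (Δ + 1) := by
  intro ν
  induction ν with
  | zero =>
      refine ⟨1, le_refl 1, fun d hd Δ => ?_⟩
      simp only [Vit]
      constructor <;> [linarith; linarith]
  | succ ν ih =>
      obtain ⟨K, hK1, hKb⟩ := ih
      have hK0 : (0:ℝ) ≤ K := by linarith
      have hVlo : ∀ d, d < N → ∀ Δ : ℕ, (Δ:ℝ) - K ≤ Vit N p ps lam ν (d, Δ) :=
        fun d hd Δ => (hKb d hd Δ).1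
      have hVhi : ∀ d, d < N → ∀ Δ : ℕ, Vit N p ps lam ν (d, Δ) ≤ K * (Δ + 1) :=
        fun d hd Δ => (hKb d hd Δ).2
      have hSlo : ∀ d, d < N → ∀ Δ, -K ≤ Ssum N p (Vit N p ps lam ν) d Δ :=
        fun d hd Δ => Ssum_ge hN hp0 hp1 hK0 hVlo hd Δ
      have hShi : ∀ d, d < N → ∀ Δ : ℕ,
          Ssum N p (Vit N p ps lam ν) d Δ ≤ K * (Δ + N + 1) :=
        fun d hd Δ => Ssum_le hN hp0 hp1 hK0 hVhi hd Δ
      have h0N : 0 < N := by omega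
      have h1N : 1 < N := by omega
      have hV00lo : -K ≤ Vit N p ps lam ν (0, 0) := by
        have := hVlo 0 h0N 0; push_cast at this; linarith
      have hV00hi : Vit N p ps lam ν (0, 0) ≤ K := by
        have := hVhi 0 h0N 0; push_cast at this; linarith
      have hV11lo : -K ≤ Vit N p ps lam ν (1, 1) := by
        have := hVlo 1 h1N 1; push_cast at this; linarith
      have hV11hi : Vit N p ps lam ν (1, 1) ≤ 2*K := by
        have := hVhi 1 h1N 1; push_cast at this; linarith
      have h12p : (0:ℝ) ≤ 1 - 2*p := by linarith
      have h2p0 : (0:ℝ) ≤ 2*p := by linarith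
      have hpK : p * K ≤ (1/3) * K := mul_le_mul_of_nonneg_right hp1 hK0
      have hpK0 : 0 ≤ p * K := mul_nonneg hp0 hK0
      -- bounds on the constant C
      have hClo : -K ≤ (1-2*p) * Vit N p ps lam ν (0,0) + 2*p * Vit N p ps lam ν (1,1) := by
        have e1 := mul_le_mul_of_nonneg_left hV00lo h12p
        have e2 := mul_le_mul_of_nonneg_left hV11lo h2p0
        nlinarith
      have hChi : (1-2*p) * Vit N p ps lam ν (0,0) + 2*p * Vit N p ps lam ν (1,1) ≤ 2*K := by
        have e1 := mul_le_mul_of_nonneg_left hV00hi h12p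
        have e2 := mul_le_mul_of_nonneg_left hV11hi h2p0
        nlinarith
      have hpsK : ps * K ≤ K := by nlinarith
      -- Q bounds
      have hQlo : ∀ d, d < N → ∀ Δ : ℕ,
          (Δ:ℝ) - 2*K ≤ Qit N p ps lam (Vit N p ps lam ν) d Δ := by
        intro d hd Δ
        unfold Qit Vact0 Vact1
        apply le_min
        · have := hSlo d hd Δ; linarith
        · have hS := hSlo d hd Δ
          have h1 := mul_le_mul_of_nonneg_left hClo hps0.le
          have h2 := mul_le_mul_of_nonneg_left hS (by linarith : (0:ℝ) ≤ 1 - ps)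
          nlinarith
      have hQhi : ∀ d, d < N → ∀ Δ : ℕ,
          Qit N p ps lam (Vit N p ps lam ν) d Δ ≤ (Δ:ℝ) + K * (Δ + N + 1) := by
        intro d hd Δ
        refine min_le_of_left_le ?_
        unfold Vact0
        have := hShi d hd Δ; linarith
      refine ⟨(N + 3) * K + 1, by nlinarith [Nat.cast_nonneg (α := ℝ) N], fun d hd Δ => ?_⟩
      have hrw : Vit N p ps lam (ν + 1) (d, Δ) =
          Qit N p ps lam (Vit N p ps lam ν) d Δ
            - Qit N p ps lam (Vit N p ps lam ν) 0 0 := rfl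
      rw [hrw]
      have hq1 := hQlo d hd Δ
      have hq2 := hQhi d hd Δ
      have hq3 := hQlo 0 h0N 0
      have hq4 := hQhi 0 h0N 0
      push_cast at hq3 hq4
      have hN2 : (2:ℝ) ≤ N := by exact_mod_cast hN
      have hKΔ : 0 ≤ K * Δ := mul_nonneg hK0 (Nat.cast_nonneg Δ)
      have hKΔN : 0 ≤ K * Δ * N := mul_nonneg hKΔ (Nat.cast_nonneg N)
      have hKN : 0 ≤ K * N := mul_nonneg hK0 (Nat.cast_nonneg N)
      constructor
      · linarith
      · linarith

lemma Ssum_lin {N : ℕ} {p : ℝ} (hN : 2 ≤ N) (hp0 : 0 ≤ p) (hp1 : p ≤ 1/3)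
    {V : ℕ × ℕ → ℝ} {K : ℝ} (hK : 0 ≤ K)
    (hV : ∀ d, d < N → ∀ Δ : ℕ, (Δ : ℝ) - K ≤ V (d, Δ))
    {d : ℕ} (hd1 : 1 ≤ d) (hd : d < N) (Δ : ℕ) :
    (Δ : ℝ)/3 - 2*K ≤ Ssum N p V d Δ := by
  have hmem : d ∈ Finset.range N := Finset.mem_range.mpr hd
  have hsplit := Finset.add_sum_erase (Finset.range N)
    (fun d' => Pw N p d d' * V (d', if d' = 0 then 0 else Δ + d')) hmem
  simp only [if_neg (by omega : ¬ d = 0)] at hsplit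
  have hdiag : (1-2*p) * ((Δ:ℝ) + d - K) ≤ Pw N p d d * V (d, Δ + d) := by
    rw [Pw_diag]
    apply mul_le_mul_of_nonneg_left _ (by linarith)
    have := hV d hd (Δ + d); push_cast at this; linarith
  have hwsum : ∑ d' ∈ (Finset.range N).erase d, Pw N p d d' = 2*p := by
    have h2 := Finset.add_sum_erase (Finset.range N) (Pw N p d) hmem
    rw [pw_sum N p hN d hd, Pw_diag] at h2
    linarith
  have herase : -(2*p*K) ≤ ∑ d' ∈ (Finset.range N).erase d,
      Pw N p d d' * V (d', if d' = 0 then 0 else Δ + d') := by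
    have h1 : ∑ d' ∈ (Finset.range N).erase d, Pw N p d d' * (-K) ≤
        ∑ d' ∈ (Finset.range N).erase d,
          Pw N p d d' * V (d', if d' = 0 then 0 else Δ + d') := by
      apply Finset.sum_le_sum
      intro d' hd'
      apply mul_le_mul_of_nonneg_left _ (Pw_nonneg hp0 hp1 d d')
      have := hV d' (Finset.mem_range.mp (Finset.mem_of_mem_erase hd'))
        (if d' = 0 then 0 else Δ + d')
      have h0 : (0:ℝ) ≤ ((if d' = 0 then 0 else Δ + d' : ℕ) : ℝ) := Nat.cast_nonneg _
      linarith
    calc -(2*p*K) = (∑ d' ∈ (Finset.range N).erase d, Pw N p d d') * (-K) := by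
          rw [hwsum]; ring
      _ = ∑ d' ∈ (Finset.range N).erase d, Pw N p d d' * (-K) := by rw [Finset.sum_mul]
      _ ≤ _ := h1
  have hd1' : (1:ℝ) ≤ (d:ℝ) := by exact_mod_cast hd1
  have hΔ0 : (0:ℝ) ≤ (Δ:ℝ) := Nat.cast_nonneg Δ
  have hpK : p * K ≤ (1/3)*K := mul_le_mul_of_nonneg_right hp1 hK
  have hpK0 : 0 ≤ p * K := mul_nonneg hp0 hK
  have hfinal : (Δ:ℝ)/3 - 2*K ≤ (1-2*p) * ((Δ:ℝ) + d - K) + (-(2*p*K)) := by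
    nlinarith [mul_nonneg (by linarith : (0:ℝ) ≤ 2/3 - 2*p) hΔ0,
      mul_nonneg (by linarith : (0:ℝ) ≤ 1 - 2*p) (by linarith : (0:ℝ) ≤ (d:ℝ))]
  unfold Ssum
  rw [← hsplit]
  linarith

/-- existence of switching points: for every iteration `ν ≥ 1` and
every `d ∈ {1,…,N-1}`, `δV_ν(d,Δ) → -∞` as `Δ → ∞`; in particular there exists a
finite switching point, namely a smallest `Δ* ∈ ℕ` such that `δV_ν(d,Δ) ≤ 0` for
all `Δ ≥ Δ*`. -/
theorem dV_switching_point_exists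
    (N : ℕ) (p ps lam : ℝ)
    (hN : 2 ≤ N) (hp0 : 0 ≤ p) (hp1 : p ≤ 1 / 3)
    (hps0 : 0 < ps) (hps1 : ps ≤ 1) (hlam : 0 ≤ lam)
    (ν : ℕ) (hν : 1 ≤ ν) (d : ℕ) (hd1 : 1 ≤ d) (hd : d ≤ N - 1) :
    Filter.Tendsto (fun Δ : ℕ => dV N p ps lam ν d Δ) Filter.atTop Filter.atBot ∧
    ∃ Δstar : ℕ,
      IsLeast {Δ0 : ℕ | ∀ Δ : ℕ, Δ0 ≤ Δ → dV N p ps lam ν d Δ ≤ 0} Δstar := by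
  have hdN : d < N := by omega
  obtain ⟨K, hK1, hKb⟩ := Vit_bounds N p ps lam hN hp0 hp1 hps0 hps1 hlam (ν - 1)
  have hK0 : (0:ℝ) ≤ K := by linarith
  have hVlo : ∀ d', d' < N → ∀ Δ : ℕ, (Δ:ℝ) - K ≤ Vit N p ps lam (ν-1) (d', Δ) :=
    fun d' hd' Δ => (hKb d' hd' Δ).1
  have hVhi : ∀ d', d' < N → ∀ Δ : ℕ, Vit N p ps lam (ν-1) (d', Δ) ≤ K * (Δ + 1) :=
    fun d' hd' Δ => (hKb d' hd' Δ).2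
  have h12p : (0:ℝ) ≤ 1 - 2*p := by linarith
  have h2p0 : (0:ℝ) ≤ 2*p := by linarith
  have hV00hi : Vit N p ps lam (ν-1) (0, 0) ≤ K := by
    have := hVhi 0 (by omega) 0; push_cast at this; linarith
  have hV11hi : Vit N p ps lam (ν-1) (1, 1) ≤ 2*K := by
    have := hVhi 1 (by omega) 1; push_cast at this; linarith
  have hpK : p * K ≤ (1/3) * K := mul_le_mul_of_nonneg_right hp1 hK0
  have hpK0 : 0 ≤ p * K := mul_nonneg hp0 hK0
  have hChi : (1-2*p) * Vit N p ps lam (ν-1) (0,0)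
      + 2*p * Vit N p ps lam (ν-1) (1,1) ≤ 2*K := by
    have e1 := mul_le_mul_of_nonneg_left hV00hi h12p
    have e2 := mul_le_mul_of_nonneg_left hV11hi h2p0
    nlinarith
  have hdVeq : ∀ Δ : ℕ, dV N p ps lam ν d Δ =
      lam + ps * ((1-2*p) * Vit N p ps lam (ν-1) (0,0)
          + 2*p * Vit N p ps lam (ν-1) (1,1))
        - ps * Ssum N p (Vit N p ps lam (ν-1)) d Δ := by
    intro Δ; unfold dV Vact1 Vact0; ring
  have hbound : ∀ Δ : ℕ, dV N p ps lam ν d Δ ≤ (lam + 4*K) - ps/3 * Δ := by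
    intro Δ
    have hS := Ssum_lin hN hp0 hp1 hK0 hVlo hd1 hdN Δ
    have h1 := mul_le_mul_of_nonneg_left hS hps0.le
    have h2 := mul_le_mul_of_nonneg_left hChi hps0.le
    have hpsK : ps * K ≤ K := by nlinarith
    rw [hdVeq Δ]
    nlinarith
  have hg : Filter.Tendsto (fun Δ : ℕ => (lam + 4*K) - ps/3 * (Δ:ℝ))
      Filter.atTop Filter.atBot := by
    have h1 : Filter.Tendsto (fun Δ : ℕ => ps/3 * (Δ:ℝ)) Filter.atTop Filter.atTop :=
      (tendsto_natCast_atTop_atTop (R := ℝ)).const_mul_atTop (by positivity)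
    have h2 : Filter.Tendsto (fun Δ : ℕ => -(ps/3 * (Δ:ℝ))) Filter.atTop Filter.atBot :=
      Filter.tendsto_neg_atTop_atBot.comp h1
    have h3 := Filter.tendsto_atBot_add_const_left Filter.atTop (lam + 4*K) h2
    simpa [sub_eq_add_neg] using h3
  have htend : Filter.Tendsto (fun Δ : ℕ => dV N p ps lam ν d Δ)
      Filter.atTop Filter.atBot := Filter.tendsto_atBot_mono hbound hg
  refine ⟨htend, ?_⟩
  have hev : ∀ᶠ Δ in Filter.atTop, dV N p ps lam ν d Δ ≤ 0 :=
    htend.eventually_le_atBot 0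
  obtain ⟨M, hM⟩ := Filter.eventually_atTop.mp hev
  have hne : {Δ0 : ℕ | ∀ Δ : ℕ, Δ0 ≤ Δ → dV N p ps lam ν d Δ ≤ 0}.Nonempty :=
    ⟨M, fun Δ hΔ => hM Δ hΔ⟩
  exact ⟨sInf _, Nat.sInf_mem hne, fun x hx => Nat.sInf_le hx⟩
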